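/- Let P be a positive opetope, and let x⃗ and x⃗' be two consecutive maximal flags (x⃗' the successor of x⃗ in the flag order). Then the intersection of x⃗ and x⃗' (the vector with 0 at each level where they differ) is a punctured flag; moreover it is a high p-flag if sgn(x⃗) = +1 and a low p-flag if sgn(x⃗) = −1. -/

import Mathlib

open scoped Classical

structure PHg where
  Face : ℕ → Type
  fin : ∀ k, Finite (Face k)
  γ : ∀ k, Face (k+1) → Face k
  δ : ∀ k, Face (k+1) → Face k → Prop
  δ_total : ∀ k a, ∃ x, δ k a x
  δ0_fun : ∀ (a : Face 1) (x y : Face 0), δ 0 a x → δ 0 a y → x = y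
  bounded : ∃ n, ∀ k, n < k → IsEmpty (Face k)

abbrev PHg.FaceS (S : PHg) : Type := Σ k, S.Face k

/-- The codomain operation, viewed on faces of arbitrary dimension
(identity in dimension 0). -/
def gammaS (S : PHg) : S.FaceS → S.FaceS
  | ⟨0, x⟩ => ⟨0, x⟩
  | ⟨k+1, x⟩ => ⟨k, S.γ k x⟩

/-- `x ∈ δ(q)`. -/
def inDelta (S : PHg) (x q : S.FaceS) : Prop :=
  match q with
  | ⟨0, _⟩ => False
  | ⟨k+1, a⟩ => ∃ h : x.1 = k, S.δ k a (h ▸ x.2)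

/-- `x = γ(q)` (for `q` of positive dimension). -/
def inGammaS (S : PHg) (x q : S.FaceS) : Prop := 0 < q.1 ∧ gammaS S q = x

/-- `x ∈ ∂(q) = {γ(q)} ∪ δ(q)`. -/
def inBoundary (S : PHg) (x q : S.FaceS) : Prop := inGammaS S x q ∨ inDelta S x q

def covPlus (S : PHg) (a b : S.FaceS) : Prop :=
  ∃ α, inDelta S a α ∧ gammaS S α = b

/-- The upper order `<⁺`. -/
def ltPlus (S : PHg) : S.FaceS → S.FaceS → Prop := Relation.TransGen (covPlus S)

def lePlus (S : PHg) (a b : S.FaceS) : Prop := a = b ∨ ltPlus S a b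

def perpPlus (S : PHg) (a b : S.FaceS) : Prop := ltPlus S a b ∨ ltPlus S b a

def covMinus (S : PHg) (a b : S.FaceS) : Prop := 0 < a.1 ∧ inDelta S (gammaS S a) b

/-- The lower order `<⁻`. -/
def ltMinus (S : PHg) : S.FaceS → S.FaceS → Prop := Relation.TransGen (covMinus S)

def perpMinus (S : PHg) (a b : S.FaceS) : Prop := ltMinus S a b ∨ ltMinus S b a

/-- Iterated codomain `γ^{(k)}`. -/
def gammaIter (S : PHg) (k : ℕ) (p : S.FaceS) : S.FaceS := (gammaS S)^[p.1 - k] p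

/-- `X` is a `<⁺`-interval. -/
def IntervalPlus (S : PHg) (X : Set S.FaceS) : Prop :=
  X = ∅ ∨ ∃ x0 x1, lePlus S x0 x1 ∧ X = {x | lePlus S x0 x ∧ lePlus S x x1}

def hasDim (S : PHg) (n : ℕ) : Prop :=
  Nonempty (S.Face n) ∧ ∀ k, n < k → IsEmpty (S.Face k)

/-- A positive opetope: a nonempty positive hypergraph satisfying globularity,
strictness, disjointness, pencil linearity, and having at most one face outside
`δ(S_{k+1})` in each dimension. -/
structure IsOpetope (S : PHg) : Prop where
  ne : Nonempty (S.Face 0)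
  glob_gamma : ∀ a : S.FaceS, 2 ≤ a.1 →
    ({gammaS S (gammaS S a)} : Set S.FaceS) =
      {x | ∃ y, inDelta S y a ∧ gammaS S y = x} \ {x | ∃ y, inDelta S y a ∧ inDelta S x y}
  glob_delta : ∀ a : S.FaceS, 2 ≤ a.1 →
    {x | inDelta S x (gammaS S a)} =
      {x | ∃ y, inDelta S y a ∧ inDelta S x y} \ {x | ∃ y, inDelta S y a ∧ gammaS S y = x}
  strict : ∀ a, ¬ ltPlus S a a
  linear0 : ∀ a b : S.FaceS, a.1 = 0 → b.1 = 0 → a = b ∨ perpPlus S a b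
  disj : ∀ a b : S.FaceS, 0 < a.1 → ¬ (perpMinus S a b ∧ perpPlus S a b)
  pencil_gamma : ∀ x a b, inGammaS S x a → inGammaS S x b → a = b ∨ perpPlus S a b
  pencil_delta : ∀ x a b, inDelta S x a → inDelta S x b → a = b ∨ perpPlus S a b
  size_le_one : ∀ k (a b : S.Face k),
    (¬ ∃ α : S.Face (k+1), S.δ k α a) → (¬ ∃ α : S.Face (k+1), S.δ k α b) → a = b
/-- A restricted flag from dimension `m` down to dimension `l`,
encoded as a function `ℕ → S.FaceS` (entries outside `[l,m]` are irrelevant). -/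
def IsRFlag (S : PHg) (m l : ℕ) (F : ℕ → S.FaceS) : Prop :=
  (∀ i, l ≤ i → i ≤ m → (F i).1 = i) ∧
  (∀ i, l ≤ i → i < m → inBoundary S (F i) (F (i+1)))

/-- The pencil order `≺ₓ` on the pencil over `x`. -/
def pencilLt (S : PHg) (x a b : S.FaceS) : Prop :=
  (inGammaS S x b ∧ inDelta S x a) ∨
  (inDelta S x a ∧ inDelta S x b ∧ ltPlus S a b) ∨
  (inGammaS S x a ∧ inGammaS S x b ∧ ltPlus S b a)

/-- The sign of the flag segment `[F j, …, F l]`. -/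
noncomputable def sgnSeg (S : PHg) (l : ℕ) (F : ℕ → S.FaceS) : ℕ → ℤ
  | 0 => 1
  | j+1 => if l ≤ j ∧ inDelta S (F j) (F (j+1)) then -(sgnSeg S l F j) else sgnSeg S l F j

/-- The flag order `◁` on flags from dimension `m` down to `l`. -/
def flagLt (S : PHg) (l m : ℕ) (F G : ℕ → S.FaceS) : Prop :=
  ∃ k, l ≤ k ∧ k ≤ m ∧ (∀ i, l ≤ i → i < k → F i = G i) ∧ F k ≠ G k ∧
    ((k = 0 ∧ ltPlus S (G 0) (F 0)) ∨
     (0 < k ∧ sgnSeg S l F (k-1) = 1 ∧ pencilLt S (F (k-1)) (F k) (G k)) ∨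
     (0 < k ∧ sgnSeg S l F (k-1) = -1 ∧ pencilLt S (F (k-1)) (G k) (F k)))

/-- `i` is the low level `ll` of the flag `F` (with top dimension `n`). -/
def LowLevelT (S : PHg) (n : ℕ) (F : ℕ → S.FaceS) (i : ℕ) : Prop :=
  i + 2 ≤ n ∧ inDelta S (F (i+1)) (F (i+2)) ∧
    ∀ j, i < j → j + 2 ≤ n → ¬ inDelta S (F (j+1)) (F (j+2))

/-- Membership in `Flags[t / b]`, flags from top face `t` (dim `m`) to bottom face `b` (dim `l`). -/
def MemFlags (S : PHg) (l m : ℕ) (t b : S.FaceS) (F : ℕ → S.FaceS) : Prop :=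
  IsRFlag S m l F ∧ F m = t ∧ F l = b

def EqOnFl {α : Type*} (l m : ℕ) (F G : ℕ → α) : Prop :=
  ∀ i, l ≤ i → i ≤ m → F i = G i

/-- `G` is the successor of `F` in `Flags[t / b]` with respect to the flag order. -/
def SuccFl (S : PHg) (l m : ℕ) (t b : S.FaceS) (F G : ℕ → S.FaceS) : Prop :=
  MemFlags S l m t b F ∧ MemFlags S l m t b G ∧ flagLt S l m F G ∧
  ∀ H, MemFlags S l m t b H → flagLt S l m F H → (EqOnFl l m G H ∨ flagLt S l m G H)

/-!
Let `F ◁ G` first differ at level `k`. For every level `m > k`, `F m` is extremal in the pencil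
over `F (m-1)` (maximal or minimal according to the sign of `F` below it), and dually for `G`:
otherwise replacing the flag from level `m` upwards would produce a flag strictly between `F`
and `G`. Globularity forces the type (`δ` or `γ`) of the step following an extremal choice, so
from level `k+2` on the sign of `F` is constantly `-1` and that of `G` constantly `1`; both flags
then only take `γ`-steps and coincide there. At level `k+1`, the extremal continuations over the
consecutive elements `F k`, `G k` of the pencil over `F (k-1)` coincide and give `F` the sign
`1`: a case analysis on the types of `F k` and `G k`, using globularity, disjointness and pencil
linearity. So the flags differ only at `k`; if `F` is positive then `k = n-1`, and otherwise `k`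
is the low level of `F`.
-/

section Faces

variable {S : PHg}

lemma inDelta_dim {x q : S.FaceS} (h : inDelta S x q) : x.1 + 1 = q.1 := by
  obtain ⟨_ | k, a⟩ := q
  · exact h.elim
  · obtain ⟨rfl, _⟩ := h
    rfl

lemma gammaS_dim {q : S.FaceS} (h : 0 < q.1) : (gammaS S q).1 + 1 = q.1 := by
  obtain ⟨_ | k, a⟩ := q
  · exact absurd h (lt_irrefl 0)
  · rfl

lemma inGammaS_dim {x q : S.FaceS} (h : inGammaS S x q) : x.1 + 1 = q.1 :=
  h.2 ▸ gammaS_dim h.1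

lemma inBoundary_dim {x q : S.FaceS} (h : inBoundary S x q) : x.1 + 1 = q.1 :=
  h.elim inGammaS_dim inDelta_dim

lemma covPlus_dim {a b : S.FaceS} (h : covPlus S a b) : a.1 = b.1 := by
  obtain ⟨α, hδ, rfl⟩ := h
  have := inDelta_dim hδ
  have := gammaS_dim (q := α) (by omega)
  omega

lemma ltPlus_dim {a b : S.FaceS} (h : ltPlus S a b) : a.1 = b.1 := by
  induction h with
  | single h => exact covPlus_dim h
  | tail _ h ih => exact ih.trans (covPlus_dim h)

lemma ltPlus_of_inDelta {a α : S.FaceS} (h : inDelta S a α) : ltPlus S a (gammaS S α) :=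
  .single ⟨α, h, rfl⟩

lemma lePlus_trans {a b c : S.FaceS} (hab : lePlus S a b) (hbc : lePlus S b c) :
    lePlus S a c := by
  rcases hab with rfl | hab
  · exact hbc
  rcases hbc with rfl | hbc
  · exact .inr hab
  · exact .inr (hab.trans hbc)

lemma ltPlus_of_ltPlus_of_lePlus {a b c : S.FaceS} (hab : ltPlus S a b) (hbc : lePlus S b c) :
    ltPlus S a c := by
  rcases hbc with rfl | hbc
  · exact hab
  · exact hab.trans hbc

lemma exists_inDelta_lePlus_of_ltPlus {a b : S.FaceS} (h : ltPlus S a b) :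
    ∃ α, inDelta S a α ∧ lePlus S (gammaS S α) b := by
  obtain ⟨c, ⟨α, hα, rfl⟩, hcb⟩ := Relation.TransGen.head'_iff.mp h
  exact ⟨α, hα, (Relation.reflTransGen_iff_eq_or_transGen.mp hcb).imp Eq.symm id⟩

def IsSource (S : PHg) (x : S.FaceS) : Prop := ∃ q, inDelta S x q

def IsTarget (S : PHg) (x : S.FaceS) : Prop := ∃ q, inGammaS S x q

lemma isSource_of_ltPlus {a b : S.FaceS} (h : ltPlus S a b) : IsSource S a := by
  obtain ⟨α, hα, -⟩ := exists_inDelta_lePlus_of_ltPlus h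
  exact ⟨α, hα⟩

lemma isTarget_of_ltPlus {a b : S.FaceS} (h : ltPlus S a b) : IsTarget S b := by
  obtain ⟨c, -, α, hα, rfl⟩ := Relation.TransGen.tail'_iff.mp h
  exact ⟨α, by have := inDelta_dim hα; omega, rfl⟩

noncomputable def stepSign (S : PHg) (x y : S.FaceS) : ℤ := if inDelta S x y then -1 else 1

lemma stepSign_of_inDelta {x y : S.FaceS} (h : inDelta S x y) : stepSign S x y = -1 :=
  if_pos h

lemma stepSign_of_not_inDelta {x y : S.FaceS} (h : ¬ inDelta S x y) : stepSign S x y = 1 :=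
  if_neg h

lemma stepSign_mul_self (x y : S.FaceS) : stepSign S x y * stepSign S x y = 1 := by
  unfold stepSign; split_ifs <;> rfl

lemma sgnSeg_succ (F : ℕ → S.FaceS) (j : ℕ) :
    sgnSeg S 0 F (j + 1) = stepSign S (F j) (F (j + 1)) * sgnSeg S 0 F j := by
  simp only [sgnSeg, zero_le, true_and, stepSign]
  split_ifs <;> simp

lemma sgnSeg_eq_one_or_eq_neg_one (F : ℕ → S.FaceS) (j : ℕ) :
    sgnSeg S 0 F j = 1 ∨ sgnSeg S 0 F j = -1 := by
  induction j with
  | zero => exact .inl rfl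
  | succ j ih =>
    rw [sgnSeg_succ]
    unfold stepSign
    split_ifs <;> omega

lemma inDelta_iff_sgnSeg_succ (F : ℕ → S.FaceS) (j : ℕ) :
    inDelta S (F j) (F (j + 1)) ↔ sgnSeg S 0 F (j + 1) = -sgnSeg S 0 F j := by
  rw [sgnSeg_succ]
  unfold stepSign
  split_ifs with h <;> rcases sgnSeg_eq_one_or_eq_neg_one F j with hs | hs <;> simp [h, hs]

lemma sgnSeg_congr {F G : ℕ → S.FaceS} {j : ℕ} (h : ∀ i ≤ j, F i = G i) :
    sgnSeg S 0 F j = sgnSeg S 0 G j := by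
  induction j with
  | zero => rfl
  | succ j ih =>
    rw [sgnSeg_succ, sgnSeg_succ, h j (by omega), h (j + 1) le_rfl,
      ih fun i hi => h i (by omega)]

lemma PHg.finite_faceS (S : PHg) : Finite S.FaceS := by
  obtain ⟨N, hN⟩ := S.bounded
  have := S.fin
  refine Finite.of_surjective
    (fun p : Σ k : Fin (N + 1), S.Face k => (⟨p.1, p.2⟩ : S.FaceS)) ?_
  rintro ⟨k, v⟩
  by_cases h : k ≤ N
  · exact ⟨⟨⟨k, by omega⟩, v⟩, rfl⟩
  · exact ((hN k (by omega)).false v).elim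

lemma not_isSource_of_dim {n : ℕ} (hn : hasDim S n) {v : S.FaceS} (hv : v.1 = n) :
    ¬ IsSource S v :=
  fun ⟨q, hq⟩ => (hn.2 q.1 (by have := inDelta_dim hq; omega)).false q.2

end Faces

namespace IsOpetope

variable {S : PHg}

lemma ltPlus_asymm (hS : IsOpetope S) {a b : S.FaceS} (h : ltPlus S a b) : ¬ ltPlus S b a :=
  fun h' => hS.strict a (h.trans h')

lemma not_inGammaS_of_inDelta (hS : IsOpetope S) {x q : S.FaceS} (hd : inDelta S x q) :
    ¬ inGammaS S x q :=
  fun hg => hS.strict x (.single ⟨q, hd, hg.2⟩)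

lemma stepSign_of_inGammaS (hS : IsOpetope S) {x y : S.FaceS} (h : inGammaS S x y) :
    stepSign S x y = 1 :=
  stepSign_of_not_inDelta fun hd => hS.not_inGammaS_of_inDelta hd h

lemma not_perpPlus_of_ltMinus (hS : IsOpetope S) {a b : S.FaceS} (h : ltMinus S a b) :
    ¬ perpPlus S a b := by
  obtain ⟨c, ⟨ha, -⟩, -⟩ := Relation.TransGen.head'_iff.mp h
  exact fun hp => hS.disj a b ha ⟨.inl h, hp⟩

lemma not_perpPlus_of_covMinus (hS : IsOpetope S) {a b : S.FaceS} (h : covMinus S a b) :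
    ¬ perpPlus S a b :=
  hS.not_perpPlus_of_ltMinus (.single h)

lemma pencilLt_asymm (hS : IsOpetope S) {x a b : S.FaceS} (h : pencilLt S x a b) :
    ¬ pencilLt S x b a := by
  rcases h with ⟨_, _⟩ | ⟨_, _, _⟩ | ⟨_, _, _⟩ <;>
    rintro (⟨_, _⟩ | ⟨_, _, _⟩ | ⟨_, _, _⟩)
  all_goals first
    | exact hS.not_inGammaS_of_inDelta ‹inDelta S x a› ‹inGammaS S x a›
    | exact hS.not_inGammaS_of_inDelta ‹inDelta S x b› ‹inGammaS S x b›
    | exact hS.ltPlus_asymm ‹ltPlus S a b› ‹ltPlus S b a›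

lemma wellFounded_flip_ltPlus (hS : IsOpetope S) : WellFounded (flip (ltPlus S)) := by
  have := S.finite_faceS
  have : IsTrans S.FaceS (flip (ltPlus S)) :=
    ⟨fun _ _ _ h₁ h₂ => Relation.TransGen.trans h₂ h₁⟩
  have : Std.Irrefl (flip (ltPlus S)) := ⟨hS.strict⟩
  exact Finite.wellFounded_of_trans_of_irrefl _

lemma eq_of_not_isSource (hS : IsOpetope S) {v w : S.FaceS} (hdim : v.1 = w.1)
    (hv : ¬ IsSource S v) (hw : ¬ IsSource S w) : v = w := by
  obtain ⟨m, v⟩ := v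
  obtain ⟨m', w⟩ := w
  obtain rfl : m = m' := hdim
  congr 1
  exact hS.size_le_one m v w (fun ⟨α, hα⟩ => hv ⟨⟨m + 1, α⟩, rfl, hα⟩)
    (fun ⟨α, hα⟩ => hw ⟨⟨m + 1, α⟩, rfl, hα⟩)

/-- Climbing along `v <⁺ γ w` for `v ∈ δ w` terminates, and can only stop at the unique face
of that dimension that is in no `δ`. -/
lemma lePlus_of_not_isSource (hS : IsOpetope S) {c : S.FaceS} (hc : ¬ IsSource S c)
    (v : S.FaceS) (hv : v.1 = c.1) : lePlus S v c := by
  induction v using hS.wellFounded_flip_ltPlus.induction with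
  | _ v ih =>
    by_cases hsv : IsSource S v
    · obtain ⟨w, hw⟩ := hsv
      have hvw := ltPlus_of_inDelta hw
      exact .inr (ltPlus_of_ltPlus_of_lePlus hvw (ih _ hvw (by rw [← ltPlus_dim hvw, hv])))
    · exact .inl (hS.eq_of_not_isSource hv hsv hc)

lemma isSource_of_covMinus (hS : IsOpetope S) {a b : S.FaceS} (h : covMinus S a b) :
    IsSource S a ∧ IsSource S b := by
  have hdim : b.1 = a.1 := by
    have := inDelta_dim h.2
    have := gammaS_dim h.1
    omega
  have hne : a ≠ b := by
    rintro rfl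
    exact hS.strict _ (ltPlus_of_inDelta h.2)
  constructor
  · by_contra ha
    rcases hS.lePlus_of_not_isSource ha b hdim with rfl | hba
    · exact hne rfl
    · exact hS.not_perpPlus_of_covMinus h (.inr hba)
  · by_contra hb
    rcases hS.lePlus_of_not_isSource hb a hdim.symm with rfl | hab
    · exact hne rfl
    · exact hS.not_perpPlus_of_covMinus h (.inl hab)

lemma not_isSource_gammaS (hS : IsOpetope S) {c : S.FaceS} (hc : ¬ IsSource S c)
    (hpos : 0 < c.1) : ¬ IsSource S (gammaS S c) := by
  rintro ⟨w, hw⟩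
  have hdim : w.1 = c.1 := by
    have := inDelta_dim hw
    have := gammaS_dim hpos
    omega
  rcases hS.lePlus_of_not_isSource hc w hdim with rfl | hwc
  · exact hS.strict _ (ltPlus_of_inDelta hw)
  · exact hS.not_perpPlus_of_covMinus ⟨hpos, hw⟩ (.inr hwc)

lemma eq_of_dim_eq_top (hS : IsOpetope S) {n : ℕ} (hn : hasDim S n) {v w : S.FaceS}
    (hv : v.1 = n) (hw : w.1 = n) : v = w :=
  hS.eq_of_not_isSource (hv.trans hw.symm) (not_isSource_of_dim hn hv) (not_isSource_of_dim hn hw)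

lemma exists_not_isSource (hS : IsOpetope S) {n : ℕ} (hn : hasDim S n) {m : ℕ} (hm : m ≤ n) :
    ∃ c : S.FaceS, c.1 = m ∧ ¬ IsSource S c := by
  induction hm using Nat.decreasingInduction with
  | self => exact ⟨⟨n, hn.1.some⟩, rfl, not_isSource_of_dim hn rfl⟩
  | of_succ m _ ih =>
    obtain ⟨c, hc, hsc⟩ := ih
    refine ⟨gammaS S c, ?_, hS.not_isSource_gammaS hsc (by omega)⟩
    have := gammaS_dim (q := c) (by omega)
    omega

lemma exists_inBoundary (hS : IsOpetope S) {n : ℕ} (hn : hasDim S n) {v : S.FaceS}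
    (hv : v.1 < n) : ∃ w, inBoundary S v w := by
  by_cases hsv : IsSource S v
  · obtain ⟨w, hw⟩ := hsv
    exact ⟨w, .inr hw⟩
  obtain ⟨c, hc, hsc⟩ := hS.exists_not_isSource hn (m := v.1 + 1) hv
  have hγ : gammaS S c = v := by
    refine hS.eq_of_not_isSource ?_ (hS.not_isSource_gammaS hsc (by omega)) hsv
    have := gammaS_dim (q := c) (by omega)
    omega
  exact ⟨c, .inl ⟨by omega, hγ⟩⟩

lemma inDelta_gammaS_or_eq_gammaS_of_inDelta (hS : IsOpetope S) {x y w : S.FaceS}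
    (hxy : inDelta S x y) (hyw : inDelta S y w) :
    inDelta S x (gammaS S w) ∨ ∃ u, inDelta S u w ∧ gammaS S u = x := by
  by_cases hx : ∃ u, inDelta S u w ∧ gammaS S u = x
  · exact .inr hx
  · have hw : 2 ≤ w.1 := by have := inDelta_dim hxy; have := inDelta_dim hyw; omega
    have : x ∈ {x' | inDelta S x' (gammaS S w)} := by
      rw [hS.glob_delta w hw]
      exact ⟨⟨y, hyw, hxy⟩, hx⟩
    exact .inl this

lemma exists_inDelta_of_inDelta_gammaS (hS : IsOpetope S) {x w : S.FaceS} (hw : 2 ≤ w.1)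
    (hx : inDelta S x (gammaS S w)) : ∃ y, inDelta S y w ∧ inDelta S x y := by
  have : x ∈ {x' | inDelta S x' (gammaS S w)} := hx
  rw [hS.glob_delta w hw] at this
  exact this.1

lemma gammaS_eq_or_exists_inDelta_of_inDelta (hS : IsOpetope S) {y w : S.FaceS}
    (hyw : inDelta S y w) (hy : 0 < y.1) :
    gammaS S y = gammaS S (gammaS S w) ∨ ∃ u, inDelta S u w ∧ inDelta S (gammaS S y) u := by
  by_cases hx : ∃ u, inDelta S u w ∧ inDelta S (gammaS S y) u
  · exact .inr hx
  · have hw : 2 ≤ w.1 := by have := inDelta_dim hyw; omega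
    have : gammaS S y ∈ ({gammaS S (gammaS S w)} : Set S.FaceS) := by
      rw [hS.glob_gamma w hw]
      exact ⟨⟨y, hyw, rfl⟩, hx⟩
    exact .inl this

lemma exists_gammaS_eq_gammaS_gammaS (hS : IsOpetope S) {w : S.FaceS} (hw : 2 ≤ w.1) :
    ∃ y, inDelta S y w ∧ gammaS S y = gammaS S (gammaS S w) := by
  have : gammaS S (gammaS S w) ∈ ({gammaS S (gammaS S w)} : Set S.FaceS) := rfl
  rw [hS.glob_gamma w hw] at this
  exact this.1

lemma ne_gammaS_gammaS_of_inDelta (hS : IsOpetope S) {x y w : S.FaceS}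
    (hxy : inDelta S x y) (hyw : inDelta S y w) : x ≠ gammaS S (gammaS S w) := by
  rintro rfl
  have hw : 2 ≤ w.1 := by have := inDelta_dim hxy; have := inDelta_dim hyw; omega
  have : gammaS S (gammaS S w) ∈ ({gammaS S (gammaS S w)} : Set S.FaceS) := rfl
  rw [hS.glob_gamma w hw] at this
  exact this.2 ⟨y, hyw, hxy⟩

end IsOpetope

section Pencil

variable {S : PHg}

def IsPencilMax (S : PHg) (x y : S.FaceS) : Prop := ∀ z, inBoundary S x z → ¬ pencilLt S x y z

def IsPencilMin (S : PHg) (x y : S.FaceS) : Prop := ∀ z, inBoundary S x z → ¬ pencilLt S x z y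

def IsPencilExtremal (S : PHg) (e : ℤ) (x y : S.FaceS) : Prop :=
  if e = 1 then IsPencilMax S x y else IsPencilMin S x y

lemma isPencilExtremal_one {x y : S.FaceS} : IsPencilExtremal S 1 x y ↔ IsPencilMax S x y :=
  iff_of_eq (if_pos rfl)

lemma isPencilExtremal_neg_one {x y : S.FaceS} :
    IsPencilExtremal S (-1) x y ↔ IsPencilMin S x y :=
  iff_of_eq (if_neg (by decide))

lemma inGammaS_of_isPencilMax {x y : S.FaceS} (hxy : inBoundary S x y)
    (hmax : IsPencilMax S x y) (hx : IsTarget S x) : inGammaS S x y := by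
  refine hxy.resolve_right fun hd => ?_
  obtain ⟨w, hw⟩ := hx
  exact hmax w (.inl hw) (.inl ⟨hw, hd⟩)

lemma inDelta_of_isPencilMin {x y : S.FaceS} (hxy : inBoundary S x y)
    (hmin : IsPencilMin S x y) (hx : IsSource S x) : inDelta S x y := by
  refine hxy.resolve_left fun hg => ?_
  obtain ⟨w, hw⟩ := hx
  exact hmin w (.inr hw) (.inl ⟨hg, hw⟩)

end Pencil

namespace IsOpetope

variable {S : PHg}

lemma not_isTarget_of_isPencilMax (hS : IsOpetope S) {x y : S.FaceS} (hxy : inGammaS S x y)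
    (hmax : IsPencilMax S x y) : ¬ IsTarget S y := by
  rintro ⟨w, hw⟩
  obtain ⟨y', hy'w, hy'x⟩ := hS.exists_gammaS_eq_gammaS_gammaS (w := w)
    (by have := inGammaS_dim hxy; have := inGammaS_dim hw; omega)
  rw [hw.2, hxy.2] at hy'x
  have hy' : inGammaS S x y' :=
    ⟨by have := inDelta_dim hy'w; have := inGammaS_dim hw; have := inGammaS_dim hxy; omega,
      hy'x⟩
  exact hmax y' (.inl hy') (.inr (.inr ⟨hxy, hy', .single ⟨w, hy'w, hw.2⟩⟩))

lemma not_isSource_of_isPencilMax (hS : IsOpetope S) {x y : S.FaceS} (hxy : inDelta S x y)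
    (hmax : IsPencilMax S x y) : ¬ IsSource S y := by
  rintro ⟨w, hw⟩
  rcases hS.inDelta_gammaS_or_eq_gammaS_of_inDelta hxy hw with hx | ⟨u, huw, rfl⟩
  · exact hmax _ (.inr hx) (.inr (.inl ⟨hxy, hx, ltPlus_of_inDelta hw⟩))
  · have hu : inGammaS S (gammaS S u) u :=
      ⟨by have := inDelta_dim huw; have := inDelta_dim hw; have := inDelta_dim hxy; omega, rfl⟩
    exact hmax u (.inl hu) (.inl ⟨hu, hxy⟩)

lemma not_isTarget_of_isPencilMin (hS : IsOpetope S) {x y : S.FaceS} (hxy : inDelta S x y)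
    (hmin : IsPencilMin S x y) : ¬ IsTarget S y := by
  rintro ⟨w, hw⟩
  rw [← hw.2] at hxy
  obtain ⟨u, huw, hxu⟩ := hS.exists_inDelta_of_inDelta_gammaS
    (by have := inDelta_dim hxy; have := gammaS_dim hw.1; omega) hxy
  rw [hw.2] at hxy
  exact hmin u (.inr hxu) (.inr (.inl ⟨hxu, hxy, .single ⟨w, huw, hw.2⟩⟩))

lemma not_isSource_of_isPencilMin (hS : IsOpetope S) {x y : S.FaceS} (hxy : inGammaS S x y)
    (hmin : IsPencilMin S x y) : ¬ IsSource S y := by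
  rintro ⟨w, hw⟩
  obtain ⟨hpos, rfl⟩ := hxy
  rcases hS.gammaS_eq_or_exists_inDelta_of_inDelta hw hpos with hx | ⟨u, huw, hxu⟩
  · have hγw : inGammaS S (gammaS S y) (gammaS S w) :=
      ⟨by have := inDelta_dim hw; have := gammaS_dim (q := w) (by omega); omega, hx.symm⟩
    exact hmin _ (.inl hγw) (.inr (.inr ⟨hγw, ⟨hpos, rfl⟩, ltPlus_of_inDelta hw⟩))
  · exact hmin u (.inr hxu) (.inl ⟨⟨hpos, rfl⟩, hxu⟩)

lemma stepSign_of_isPencilExtremal (hS : IsOpetope S) {e : ℤ} (he : e = 1 ∨ e = -1)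
    {x y w : S.FaceS} (hxy : inBoundary S x y) (hext : IsPencilExtremal S e x y)
    (hyw : inBoundary S y w) : stepSign S y w = -e * stepSign S x y := by
  have of_not_isTarget (h : ¬ IsTarget S y) : stepSign S y w = -1 :=
    stepSign_of_inDelta (hyw.resolve_left fun hg => h ⟨w, hg⟩)
  have of_not_isSource (h : ¬ IsSource S y) : stepSign S y w = 1 :=
    stepSign_of_not_inDelta fun hd => h ⟨w, hd⟩
  rcases he with rfl | rfl <;>
    simp only [isPencilExtremal_one, isPencilExtremal_neg_one] at hext <;> rcases hxy with hg | hd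
  · rw [of_not_isTarget (hS.not_isTarget_of_isPencilMax hg hext), hS.stepSign_of_inGammaS hg]
    rfl
  · rw [of_not_isSource (hS.not_isSource_of_isPencilMax hd hext), stepSign_of_inDelta hd]
    rfl
  · rw [of_not_isSource (hS.not_isSource_of_isPencilMin hg hext), hS.stepSign_of_inGammaS hg]
    rfl
  · rw [of_not_isTarget (hS.not_isTarget_of_isPencilMin hd hext), stepSign_of_inDelta hd]
    rfl

lemma lePlus_gammaS_gammaS_of_inDelta (hS : IsOpetope S) {a β : S.FaceS} (h : inDelta S a β)
    (ha : 0 < a.1) : lePlus S (gammaS S a) (gammaS S (gammaS S β)) := by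
  suffices ∀ z, (∃ a', inDelta S a' β ∧ gammaS S a' = z) →
      lePlus S z (gammaS S (gammaS S β)) from this _ ⟨a, h, rfl⟩
  intro z
  induction z using hS.wellFounded_flip_ltPlus.induction with
  | _ z ih =>
    rintro ⟨a', ha', rfl⟩
    have ha'pos : 0 < a'.1 := by have := inDelta_dim h; have := inDelta_dim ha'; omega
    rcases hS.gammaS_eq_or_exists_inDelta_of_inDelta ha' ha'pos with he | ⟨u, huβ, hu⟩
    · exact .inl he
    · have hlt := ltPlus_of_inDelta hu
      exact .inr (ltPlus_of_ltPlus_of_lePlus hlt (ih _ hlt ⟨u, huβ, rfl⟩))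

lemma lePlus_gammaS_of_covPlus (hS : IsOpetope S) {a b : S.FaceS} (h : covPlus S a b)
    (ha : 0 < a.1) : lePlus S (gammaS S a) (gammaS S b) := by
  obtain ⟨β, hβ, rfl⟩ := h
  exact hS.lePlus_gammaS_gammaS_of_inDelta hβ ha

lemma lePlus_gammaS_of_ltPlus (hS : IsOpetope S) {a b : S.FaceS} (h : ltPlus S a b)
    (ha : 0 < a.1) : lePlus S (gammaS S a) (gammaS S b) := by
  induction h with
  | single h => exact hS.lePlus_gammaS_of_covPlus h ha
  | tail hac hcb ih =>
    exact lePlus_trans ih (hS.lePlus_gammaS_of_covPlus hcb (by rw [← ltPlus_dim hac]; exact ha))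

lemma ltMinus_of_ltPlus {a b P Q : S.FaceS} (h : ltPlus S a b) (hP : 0 < P.1)
    (hPa : gammaS S P = a) (hbQ : inDelta S b Q) : ltMinus S P Q := by
  induction h generalizing Q with
  | single h =>
    obtain ⟨ξ, haξ, rfl⟩ := h
    exact .tail (.single ⟨hP, by rw [hPa]; exact haξ⟩)
      ⟨by have := inDelta_dim haξ; omega, hbQ⟩
  | tail _ h ih =>
    obtain ⟨ξ, hcξ, rfl⟩ := h
    exact .tail (ih hcξ) ⟨by have := inDelta_dim hcξ; omega, hbQ⟩

/-- Walking one sector `ω` up from `C` towards `B` gives `γ γ ω = x`; comparing `u` with `ω`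
in the pencil over `C` then forces `γ γ u = x`, which globularity excludes since
`x ∈ δ δ u`, or `γ u <⁻ a <⁺ γ u`, which disjointness excludes. -/
lemma not_ltPlus_of_not_isTarget (hS : IsOpetope S) {x a u C B : S.FaceS}
    (hxa : inDelta S x a) (hau : inDelta S a u) (hu : ¬ IsTarget S u)
    (hCu : inDelta S C u) (hxC : inGammaS S x C) (hxB : inGammaS S x B) : ¬ ltPlus S C B := by
  intro hCB
  have hx := hS.ne_gammaS_gammaS_of_inDelta hxa hau
  have hupos : 0 < (gammaS S u).1 := by
    have := inDelta_dim hxa; have := inDelta_dim hau; have := gammaS_dim (q := u) (by omega)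
    omega
  obtain ⟨ω, hCω, hωB⟩ := exists_inDelta_lePlus_of_ltPlus hCB
  have hω : gammaS S (gammaS S ω) = x := by
    rcases hS.gammaS_eq_or_exists_inDelta_of_inDelta hCω hxC.1 with he | ⟨y, hyω, hxy⟩
    · rw [← he, hxC.2]
    · rw [hxC.2, ← hxB.2] at hxy
      exact absurd (.inr (ltPlus_of_ltPlus_of_lePlus (ltPlus_of_inDelta hyω) hωB))
        (hS.not_perpPlus_of_covMinus ⟨hxB.1, hxy⟩)
  rcases hS.pencil_delta C u ω hCu hCω with rfl | huω | hωu
  · exact hx hω.symm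
  · rcases hS.lePlus_gammaS_of_ltPlus huω (by have := inDelta_dim hCu; omega) with he | hlt
    · exact hx (by rw [he, hω])
    rcases hS.lePlus_gammaS_of_ltPlus hlt hupos with he | hlt
    · exact hx (by rw [he, hω])
    rw [hω] at hlt
    exact hS.not_perpPlus_of_ltMinus (ltMinus_of_ltPlus hlt hupos rfl hxa)
      (.inr (ltPlus_of_inDelta hau))
  · exact hu (isTarget_of_ltPlus hωu)

lemma eq_of_gammaS_eq (hS : IsOpetope S) {u v : S.FaceS} (hu : ¬ IsTarget S u)
    (hv : ¬ IsTarget S v) (hupos : 0 < u.1) (hvpos : 0 < v.1) (h : gammaS S u = gammaS S v) :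
    u = v := by
  rcases hS.pencil_gamma (gammaS S u) u v ⟨hupos, rfl⟩ ⟨hvpos, h.symm⟩ with huv | huv | hvu
  · exact huv
  · exact absurd (isTarget_of_ltPlus huv) hv
  · exact absurd (isTarget_of_ltPlus hvu) hu

lemma eq_of_inDelta_of_inDelta (hS : IsOpetope S) {x u v : S.FaceS} (hxu : inDelta S x u)
    (hxv : inDelta S x v) (hu : ¬ IsTarget S u) (hv : ¬ IsTarget S v) : u = v := by
  rcases hS.pencil_delta x u v hxu hxv with huv | huv | hvu
  · exact huv
  · exact absurd (isTarget_of_ltPlus huv) hv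
  · exact absurd (isTarget_of_ltPlus hvu) hu

lemma gammaS_eq_of_isPencilMin (hS : IsOpetope S) {p q v : S.FaceS} (hpq : ltPlus S p q)
    (hsec : ∀ α, inDelta S p α → ¬ ltPlus S (gammaS S α) q)
    (hpv : inDelta S p v) (hv : IsPencilMin S p v) : gammaS S v = q := by
  obtain ⟨α, hpα, hαq⟩ := exists_inDelta_lePlus_of_ltPlus hpq
  have hγα : gammaS S α = q := hαq.resolve_right (hsec α hpα)
  rcases hS.pencil_delta p v α hpv hpα with rfl | hvα | hαv
  · exact hγα
  · have := hS.lePlus_gammaS_of_ltPlus hvα (by have := inDelta_dim hpv; omega)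
    rw [hγα] at this
    exact this.resolve_right (hsec v hpv)
  · exact absurd (.inr (.inl ⟨hpα, hpv, hαv⟩)) (hv α (.inr hpα))

lemma eq_of_isPencilMin_of_isPencilMax (hS : IsOpetope S) {p q u v : S.FaceS}
    (hpq : ltPlus S p q) (hsec : ∀ α, inDelta S p α → ¬ ltPlus S (gammaS S α) q)
    (hpu : inDelta S p u) (hu : IsPencilMin S p u) (hqv : inGammaS S q v)
    (hv : IsPencilMax S q v) : u = v :=
  hS.eq_of_gammaS_eq (hS.not_isTarget_of_isPencilMin hpu hu)
    (hS.not_isTarget_of_isPencilMax hqv hv) (by have := inDelta_dim hpu; omega) hqv.1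
    ((hS.gammaS_eq_of_isPencilMin hpq hsec hpu hu).trans hqv.2.symm)

lemma not_ltPlus_gammaS_of_inDelta_of_consecutive (hS : IsOpetope S) {x p q : S.FaceS}
    (hxp : inDelta S x p) (hxq : inDelta S x q)
    (hcons : ∀ z, inBoundary S x z → ¬ (pencilLt S x p z ∧ pencilLt S x z q))
    (α : S.FaceS) (hpα : inDelta S p α) : ¬ ltPlus S (gammaS S α) q := by
  intro hαq
  rcases hS.inDelta_gammaS_or_eq_gammaS_of_inDelta hxp hpα with hx | ⟨C, hCα, rfl⟩
  · exact hcons _ (.inr hx)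
      ⟨.inr (.inl ⟨hxp, hx, ltPlus_of_inDelta hpα⟩), .inr (.inl ⟨hx, hxq, hαq⟩)⟩
  · exact hS.not_perpPlus_of_covMinus
      ⟨by have := inDelta_dim hCα; have := inDelta_dim hpα; have := inDelta_dim hxp; omega,
        hxq⟩
      (.inl ((ltPlus_of_inDelta hCα).trans hαq))

lemma not_ltPlus_gammaS_of_inGammaS_of_consecutive (hS : IsOpetope S) {x p q : S.FaceS}
    (hxp : inGammaS S x p) (hxq : inGammaS S x q)
    (hcons : ∀ z, inBoundary S x z → ¬ (pencilLt S x q z ∧ pencilLt S x z p))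
    (α : S.FaceS) (hpα : inDelta S p α) : ¬ ltPlus S (gammaS S α) q := by
  intro hαq
  rcases hS.gammaS_eq_or_exists_inDelta_of_inDelta hpα hxp.1 with hx | ⟨y, hyα, hxy⟩
  · have hz : inGammaS S x (gammaS S α) :=
      ⟨by have := ltPlus_dim hαq; have := inGammaS_dim hxq; omega, by rw [← hxp.2, hx]⟩
    exact hcons _ (.inl hz)
      ⟨.inr (.inr ⟨hxq, hz, hαq⟩), .inr (.inr ⟨hz, hxp, ltPlus_of_inDelta hpα⟩)⟩
  · rw [hxp.2, ← hxq.2] at hxy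
    exact hS.not_perpPlus_of_covMinus ⟨hxq.1, hxy⟩ (.inr ((ltPlus_of_inDelta hyα).trans hαq))

lemma eq_of_consecutive_of_inDelta_of_inGammaS (hS : IsOpetope S) {x a b u v : S.FaceS}
    (hxa : inDelta S x a) (hxb : inGammaS S x b)
    (hcons : ∀ z, inBoundary S x z → ¬ (pencilLt S x a z ∧ pencilLt S x z b))
    (hau : inDelta S a u) (hu : IsPencilMin S a u) (hbv : inDelta S b v)
    (hv : IsPencilMin S b v) : u = v := by
  have hut := hS.not_isTarget_of_isPencilMin hau hu
  rcases hS.inDelta_gammaS_or_eq_gammaS_of_inDelta hxa hau with hx | ⟨C, hCu, hCx⟩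
  · exact absurd ⟨.inr (.inl ⟨hxa, hx, ltPlus_of_inDelta hau⟩), .inl ⟨hxb, hx⟩⟩
      (hcons _ (.inr hx))
  have hxC : inGammaS S x C :=
    ⟨by have := inDelta_dim hCu; have := inDelta_dim hau; have := inDelta_dim hxa; omega, hCx⟩
  rcases hS.pencil_gamma x C b hxC hxb with rfl | hCb | hbC
  · exact hS.eq_of_inDelta_of_inDelta hCu hbv hut (hS.not_isTarget_of_isPencilMin hbv hv)
  · exact absurd hCb (hS.not_ltPlus_of_not_isTarget hxa hau hut hCu hxC hxb)
  · exact absurd ⟨.inl ⟨hxC, hxa⟩, .inr (.inr ⟨hxC, hxb, hbC⟩)⟩ (hcons C (.inl hxC))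

/-- The polarities are those that consecutive flags impose on their continuations over `a`
and `b`. -/
theorem stepSign_eq_and_eq_of_consecutive (hS : IsOpetope S) {x a b u v : S.FaceS}
    (hab : pencilLt S x a b)
    (hcons : ∀ z, inBoundary S x z → ¬ (pencilLt S x a z ∧ pencilLt S x z b))
    (hau : inBoundary S a u) (hu : IsPencilExtremal S (stepSign S x a) a u)
    (hbv : inBoundary S b v) (hv : IsPencilExtremal S (-stepSign S x b) b v) :
    stepSign S a u = stepSign S x a ∧ stepSign S b v = -stepSign S x b ∧ u = v := by
  rcases hab with ⟨hxb, hxa⟩ | ⟨hxa, hxb, hab⟩ | ⟨hxa, hxb, hba⟩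
  · simp only [stepSign_of_inDelta hxa, hS.stepSign_of_inGammaS hxb,
      isPencilExtremal_neg_one] at hu hv ⊢
    have hsrc := hS.isSource_of_covMinus (a := b) (b := a) ⟨hxb.1, by rw [hxb.2]; exact hxa⟩
    have hau := inDelta_of_isPencilMin hau hu hsrc.2
    have hbv := inDelta_of_isPencilMin hbv hv hsrc.1
    exact ⟨stepSign_of_inDelta hau, stepSign_of_inDelta hbv,
      hS.eq_of_consecutive_of_inDelta_of_inGammaS hxa hxb hcons hau hu hbv hv⟩
  · simp only [stepSign_of_inDelta hxa, stepSign_of_inDelta hxb, neg_neg,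
      isPencilExtremal_neg_one, isPencilExtremal_one] at hu hv ⊢
    have hau := inDelta_of_isPencilMin hau hu (isSource_of_ltPlus hab)
    have hbv := inGammaS_of_isPencilMax hbv hv (isTarget_of_ltPlus hab)
    exact ⟨stepSign_of_inDelta hau, hS.stepSign_of_inGammaS hbv,
      hS.eq_of_isPencilMin_of_isPencilMax hab
        (hS.not_ltPlus_gammaS_of_inDelta_of_consecutive hxa hxb hcons) hau hu hbv hv⟩
  · simp only [hS.stepSign_of_inGammaS hxa, hS.stepSign_of_inGammaS hxb,
      isPencilExtremal_neg_one, isPencilExtremal_one] at hu hv ⊢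
    have hau := inGammaS_of_isPencilMax hau hu (isTarget_of_ltPlus hba)
    have hbv := inDelta_of_isPencilMin hbv hv (isSource_of_ltPlus hba)
    exact ⟨hS.stepSign_of_inGammaS hau, stepSign_of_inDelta hbv,
      (hS.eq_of_isPencilMin_of_isPencilMax hba
        (hS.not_ltPlus_gammaS_of_inGammaS_of_consecutive hxb hxa hcons) hbv hv hau hu).symm⟩

theorem stepSign_eq_and_eq_of_consecutive_of_dim_eq_zero (hS : IsOpetope S)
    {a b u v : S.FaceS} (hba : ltPlus S b a) (hb : b.1 = 0)
    (hcons : ∀ z : S.FaceS, z.1 = 0 → ¬ (ltPlus S z a ∧ ltPlus S b z))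
    (hau : inBoundary S a u) (hu : IsPencilMax S a u)
    (hbv : inBoundary S b v) (hv : IsPencilMin S b v) :
    stepSign S a u = 1 ∧ u = v := by
  have hau := inGammaS_of_isPencilMax hau hu (isTarget_of_ltPlus hba)
  have hbv := inDelta_of_isPencilMin hbv hv (isSource_of_ltPlus hba)
  refine ⟨hS.stepSign_of_inGammaS hau,
    (hS.eq_of_isPencilMin_of_isPencilMax hba ?_ hbv hv hau hu).symm⟩
  intro α hbα hαa
  have hlt := ltPlus_of_inDelta hbα
  exact hcons _ (by rw [← ltPlus_dim hlt, hb]) ⟨hαa, hlt⟩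

end IsOpetope

section Flags

variable {S : PHg}

lemma inGammaS_of_sgnSeg_succ_eq {F : ℕ → S.FaceS} {j : ℕ}
    (h : inBoundary S (F j) (F (j + 1))) (hs : sgnSeg S 0 F (j + 1) = sgnSeg S 0 F j) :
    inGammaS S (F j) (F (j + 1)) :=
  h.resolve_right fun hd => by
    have := (inDelta_iff_sgnSeg_succ F j).mp hd
    rcases sgnSeg_eq_one_or_eq_neg_one F j with h | h <;> omega

def levelLt (S : PHg) (F : ℕ → S.FaceS) (k : ℕ) (a b : S.FaceS) : Prop :=
  (k = 0 ∧ ltPlus S b a) ∨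
  (0 < k ∧ sgnSeg S 0 F (k - 1) = 1 ∧ pencilLt S (F (k - 1)) a b) ∨
  (0 < k ∧ sgnSeg S 0 F (k - 1) = -1 ∧ pencilLt S (F (k - 1)) b a)

lemma levelLt_zero_iff {F : ℕ → S.FaceS} {a b : S.FaceS} :
    levelLt S F 0 a b ↔ ltPlus S b a := by
  simp [levelLt]

lemma levelLt_succ_iff {F : ℕ → S.FaceS} {m : ℕ} {a b : S.FaceS} :
    levelLt S F (m + 1) a b ↔
      if sgnSeg S 0 F m = 1 then pencilLt S (F m) a b else pencilLt S (F m) b a := by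
  rcases sgnSeg_eq_one_or_eq_neg_one F m with hs | hs <;> simp [levelLt, hs]

lemma levelLt_congr {F H : ℕ → S.FaceS} {k : ℕ} (h : ∀ i < k, F i = H i) (a b : S.FaceS) :
    levelLt S F k a b ↔ levelLt S H k a b := by
  rcases k with _ | m
  · simp only [levelLt_zero_iff]
  · simp only [levelLt_succ_iff, h m (by omega), sgnSeg_congr (j := m) fun i hi => h i (by omega)]

lemma flagLt_iff {n : ℕ} {F G : ℕ → S.FaceS} :
    flagLt S 0 n F G ↔
      ∃ k ≤ n, (∀ i < k, F i = G i) ∧ F k ≠ G k ∧ levelLt S F k (F k) (G k) := by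
  have h0 {k : ℕ} : (k = 0 ∧ ltPlus S (G 0) (F 0)) ↔ (k = 0 ∧ ltPlus S (G k) (F k)) :=
    ⟨fun ⟨hk, h⟩ => ⟨hk, hk ▸ h⟩, fun ⟨hk, h⟩ => ⟨hk, hk ▸ h⟩⟩
  simp only [flagLt, levelLt, h0, Nat.zero_le, true_implies, true_and]

namespace IsOpetope

lemma levelLt_asymm (hS : IsOpetope S) {F : ℕ → S.FaceS} {k : ℕ} {a b : S.FaceS}
    (h : levelLt S F k a b) : ¬ levelLt S F k b a := by
  rcases k with _ | m
  · rw [levelLt_zero_iff] at h ⊢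
    exact hS.ltPlus_asymm h
  · rw [levelLt_succ_iff] at h ⊢
    split_ifs at h ⊢ <;> exact hS.pencilLt_asymm h

lemma flagLt_of_levelLt (hS : IsOpetope S) {n m : ℕ} {F H : ℕ → S.FaceS} (hm : m ≤ n)
    (hagr : ∀ i < m, F i = H i) (h : levelLt S F m (F m) (H m)) : flagLt S 0 n F H := by
  refine flagLt_iff.mpr ⟨m, hm, hagr, fun he => ?_, h⟩
  rw [he] at h
  exact hS.levelLt_asymm h h

lemma flagLt_asymm (hS : IsOpetope S) {n : ℕ} {F G : ℕ → S.FaceS} (h : flagLt S 0 n F G) :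
    ¬ flagLt S 0 n G F := by
  rw [flagLt_iff] at h ⊢
  rintro ⟨k', -, hagr', hne', hlt'⟩
  obtain ⟨k, -, hagr, hne, hlt⟩ := h
  obtain rfl : k = k' := by
    rcases lt_trichotomy k k' with h | h | h
    · exact absurd (hagr' k h).symm hne
    · exact h
    · exact absurd (hagr k' h).symm hne'
  exact hS.levelLt_asymm hlt ((levelLt_congr (fun i hi => (hagr i hi).symm) _ _).mp hlt')

end IsOpetope

noncomputable def upFace (S : PHg) (v : S.FaceS) : S.FaceS :=
  if h : ∃ w, inBoundary S v w then h.choose else v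

noncomputable def replaceFrom (S : PHg) (F : ℕ → S.FaceS) (m : ℕ) (y : S.FaceS) :
    ℕ → S.FaceS :=
  fun i => if i < m then F i else (upFace S)^[i - m] y

lemma replaceFrom_of_lt {F : ℕ → S.FaceS} {m i : ℕ} {y : S.FaceS} (h : i < m) :
    replaceFrom S F m y i = F i :=
  if_pos h

lemma replaceFrom_self {F : ℕ → S.FaceS} {m : ℕ} {y : S.FaceS} :
    replaceFrom S F m y m = y := by
  simp [replaceFrom]

namespace IsOpetope

lemma inBoundary_upFace (hS : IsOpetope S) {n : ℕ} (hn : hasDim S n) {v : S.FaceS}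
    (hv : v.1 < n) : inBoundary S v (upFace S v) := by
  have h := hS.exists_inBoundary hn hv
  rw [upFace, dif_pos h]
  exact h.choose_spec

lemma isRFlag_replaceFrom (hS : IsOpetope S) {n m : ℕ} (hn : hasDim S n) {F : ℕ → S.FaceS}
    {y : S.FaceS} (hF : IsRFlag S n 0 F) (hy : y.1 = m)
    (hyF : ∀ j, j + 1 = m → inBoundary S (F j) y) : IsRFlag S n 0 (replaceFrom S F m y) := by
  have hup : ∀ j, m + j ≤ n → ((upFace S)^[j] y).1 = m + j := by
    intro j hj
    induction j with
    | zero => exact hy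
    | succ j ih =>
      rw [Function.iterate_succ_apply']
      have := inBoundary_dim (hS.inBoundary_upFace hn (v := (upFace S)^[j] y) (by omega))
      omega
  have hdim : ∀ i ≤ n, (replaceFrom S F m y i).1 = i := by
    intro i hi
    by_cases h : i < m
    · rw [replaceFrom_of_lt h]
      exact hF.1 i (Nat.zero_le _) hi
    · simp only [replaceFrom, if_neg h]
      rw [hup _ (by omega)]
      omega
  refine ⟨fun i _ hi => hdim i hi, fun i _ hi => ?_⟩
  rcases lt_trichotomy (i + 1) m with h | h | h
  · rw [replaceFrom_of_lt h, replaceFrom_of_lt (by omega)]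
    exact hF.2 i (Nat.zero_le _) hi
  · rw [replaceFrom_of_lt (by omega), ← h, replaceFrom_self]
    exact hyF i h
  · have h' : ¬ i < m := by omega
    simp only [replaceFrom, if_neg h', if_neg (show ¬ i + 1 < m by omega),
      show i + 1 - m = i - m + 1 by omega, Function.iterate_succ_apply']
    refine hS.inBoundary_upFace hn ?_
    rw [hup _ (by omega)]
    omega

lemma sgnSeg_add_two_of_isPencilExtremal (hS : IsOpetope S) {F : ℕ → S.FaceS} {m : ℕ}
    {e : ℤ} (he : e = 1 ∨ e = -1) (h₁ : inBoundary S (F m) (F (m + 1)))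
    (h₂ : inBoundary S (F (m + 1)) (F (m + 2))) (hext : IsPencilExtremal S e (F m) (F (m + 1))) :
    sgnSeg S 0 F (m + 2) = -e * sgnSeg S 0 F m := by
  rw [show m + 2 = m + 1 + 1 from rfl, sgnSeg_succ, sgnSeg_succ,
    hS.stepSign_of_isPencilExtremal he h₁ hext h₂]
  linear_combination (-e * sgnSeg S 0 F m) * stepSign_mul_self (S := S) (F m) (F (m + 1))

end IsOpetope

structure ConsecutiveAt (S : PHg) (n : ℕ) (t : S.FaceS) (F G : ℕ → S.FaceS) (k : ℕ) :
    Prop where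
  opetope : IsOpetope S
  dim : hasDim S n
  flag_left : IsRFlag S n 0 F
  top_left : F n = t
  flag_right : IsRFlag S n 0 G
  top_right : G n = t
  le_top : k ≤ n
  eq_below : ∀ i < k, F i = G i
  ne_at : F k ≠ G k
  lt_at : levelLt S F k (F k) (G k)
  succ : ∀ H, IsRFlag S n 0 H → H n = t → flagLt S 0 n F H →
    EqOnFl 0 n G H ∨ flagLt S 0 n G H

namespace ConsecutiveAt

variable {n : ℕ} {t : S.FaceS} {F G : ℕ → S.FaceS} {k : ℕ}

lemma lt_top (hc : ConsecutiveAt S n t F G k) : k < n := by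
  refine lt_of_le_of_ne hc.le_top fun h => hc.ne_at ?_
  subst h
  exact hc.top_left.trans hc.top_right.symm

lemma top_eq (hc : ConsecutiveAt S n t F G k) {H : ℕ → S.FaceS} (hH : IsRFlag S n 0 H) :
    H n = t :=
  hc.opetope.eq_of_dim_eq_top hc.dim (hH.1 n (Nat.zero_le _) le_rfl)
    (hc.top_left ▸ hc.flag_left.1 n (Nat.zero_le _) le_rfl)

lemma not_flagLt_flagLt (hc : ConsecutiveAt S n t F G k) {H : ℕ → S.FaceS}
    (hH : IsRFlag S n 0 H) (h₁ : flagLt S 0 n F H) (h₂ : flagLt S 0 n H G) : False := by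
  rcases hc.succ H hH (hc.top_eq hH) h₁ with he | h
  · obtain ⟨j, -, hj, -, hne, -⟩ := h₂
    exact hne (he j (Nat.zero_le _) hj).symm
  · exact hc.opetope.flagLt_asymm h₂ h

lemma flagLt_of_eq_left (hc : ConsecutiveAt S n t F G k) {H : ℕ → S.FaceS}
    (hagr : ∀ i ≤ k, H i = F i) : flagLt S 0 n H G := by
  refine hc.opetope.flagLt_of_levelLt hc.le_top
    (fun i hi => (hagr i hi.le).trans (hc.eq_below i hi)) ?_
  rw [levelLt_congr fun i hi => hagr i hi.le, hagr k le_rfl]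
  exact hc.lt_at

lemma flagLt_of_eq_right (hc : ConsecutiveAt S n t F G k) {H : ℕ → S.FaceS}
    (hagr : ∀ i ≤ k, H i = G i) : flagLt S 0 n F H := by
  refine hc.opetope.flagLt_of_levelLt hc.le_top
    (fun i hi => (hc.eq_below i hi).trans (hagr i hi.le).symm) ?_
  rw [hagr k le_rfl]
  exact hc.lt_at

lemma not_levelLt_left (hc : ConsecutiveAt S n t F G k) {m : ℕ} (hkm : k ≤ m) (hmn : m < n)
    {y : S.FaceS} (hy : inBoundary S (F m) y) : ¬ levelLt S F (m + 1) (F (m + 1)) y := by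
  intro hlt
  have hH := hc.opetope.isRFlag_replaceFrom (m := m + 1) (y := y) hc.dim hc.flag_left
    (by have := inBoundary_dim hy; have := hc.flag_left.1 m (Nat.zero_le _) hmn.le; omega)
    (fun j hj => by obtain rfl : j = m := by omega
                    exact hy)
  refine hc.not_flagLt_flagLt hH ?_ (hc.flagLt_of_eq_left fun i hi => replaceFrom_of_lt (by omega))
  refine hc.opetope.flagLt_of_levelLt hmn (fun i hi => (replaceFrom_of_lt hi).symm) ?_
  rwa [replaceFrom_self]

lemma not_levelLt_right (hc : ConsecutiveAt S n t F G k) {m : ℕ} (hkm : k ≤ m) (hmn : m < n)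
    {y : S.FaceS} (hy : inBoundary S (G m) y) : ¬ levelLt S G (m + 1) y (G (m + 1)) := by
  intro hlt
  have hH := hc.opetope.isRFlag_replaceFrom (m := m + 1) (y := y) hc.dim hc.flag_right
    (by have := inBoundary_dim hy; have := hc.flag_right.1 m (Nat.zero_le _) hmn.le; omega)
    (fun j hj => by obtain rfl : j = m := by omega
                    exact hy)
  refine hc.not_flagLt_flagLt hH (hc.flagLt_of_eq_right fun i hi => replaceFrom_of_lt (by omega)) ?_
  refine hc.opetope.flagLt_of_levelLt hmn (fun i hi => replaceFrom_of_lt hi) ?_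
  rwa [replaceFrom_self, levelLt_congr fun i hi => replaceFrom_of_lt hi]

lemma not_levelLt_between (hc : ConsecutiveAt S n t F G k) {y : S.FaceS} (hy : y.1 = k)
    (hyF : ∀ j, j + 1 = k → inBoundary S (F j) y) :
    ¬ (levelLt S F k (F k) y ∧ levelLt S F k y (G k)) := by
  rintro ⟨h₁, h₂⟩
  have hH := hc.opetope.isRFlag_replaceFrom hc.dim hc.flag_left hy hyF
  refine hc.not_flagLt_flagLt hH ?_ ?_
  · exact hc.opetope.flagLt_of_levelLt hc.le_top (fun i hi => (replaceFrom_of_lt hi).symm)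
      (by rwa [replaceFrom_self])
  · refine hc.opetope.flagLt_of_levelLt hc.le_top
      (fun i hi => (replaceFrom_of_lt hi).trans (hc.eq_below i hi)) ?_
    rwa [replaceFrom_self, levelLt_congr fun i hi => replaceFrom_of_lt hi]

lemma isPencilExtremal_left (hc : ConsecutiveAt S n t F G k) {m : ℕ} (hkm : k ≤ m)
    (hmn : m < n) : IsPencilExtremal S (sgnSeg S 0 F m) (F m) (F (m + 1)) := by
  have h z hz := levelLt_succ_iff.not.mp (hc.not_levelLt_left hkm hmn (y := z) hz)
  unfold IsPencilExtremal
  split_ifs with hs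
  · exact fun z hz => by simpa only [if_pos hs] using h z hz
  · exact fun z hz => by simpa only [if_neg hs] using h z hz

lemma isPencilExtremal_right (hc : ConsecutiveAt S n t F G k) {m : ℕ} (hkm : k ≤ m)
    (hmn : m < n) : IsPencilExtremal S (-sgnSeg S 0 G m) (G m) (G (m + 1)) := by
  have h z hz := levelLt_succ_iff.not.mp (hc.not_levelLt_right hkm hmn (y := z) hz)
  rcases sgnSeg_eq_one_or_eq_neg_one G m with hs | hs
  · rw [hs, isPencilExtremal_neg_one]
    exact fun z hz => by simpa only [hs, if_true] using h z hz
  · rw [hs, neg_neg, isPencilExtremal_one]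
    exact fun z hz => by simpa only [hs, if_neg (show (-1 : ℤ) ≠ 1 by decide)] using h z hz

lemma sgnSeg_left_eq_neg_one (hc : ConsecutiveAt S n t F G k) {j : ℕ} (hkj : k + 2 ≤ j)
    (hjn : j ≤ n) : sgnSeg S 0 F j = -1 := by
  obtain ⟨m, rfl⟩ : ∃ m, j = m + 2 := ⟨j - 2, by omega⟩
  have hs := sgnSeg_eq_one_or_eq_neg_one F m
  rw [hc.opetope.sgnSeg_add_two_of_isPencilExtremal hs (hc.flag_left.2 m (Nat.zero_le _) (by omega))
    (hc.flag_left.2 (m + 1) (Nat.zero_le _) (by omega))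
    (hc.isPencilExtremal_left (by omega) (by omega))]
  rcases hs with hs | hs <;> rw [hs] <;> rfl

lemma sgnSeg_right_eq_one (hc : ConsecutiveAt S n t F G k) {j : ℕ} (hkj : k + 2 ≤ j)
    (hjn : j ≤ n) : sgnSeg S 0 G j = 1 := by
  obtain ⟨m, rfl⟩ : ∃ m, j = m + 2 := ⟨j - 2, by omega⟩
  have hs := sgnSeg_eq_one_or_eq_neg_one G m
  rw [hc.opetope.sgnSeg_add_two_of_isPencilExtremal (by omega)
    (hc.flag_right.2 m (Nat.zero_le _) (by omega))
    (hc.flag_right.2 (m + 1) (Nat.zero_le _) (by omega))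
    (hc.isPencilExtremal_right (by omega) (by omega))]
  rcases hs with hs | hs <;> rw [hs] <;> rfl

lemma eq_of_add_two_le (hc : ConsecutiveAt S n t F G k) {j : ℕ} (hkj : k + 2 ≤ j)
    (hjn : j ≤ n) : F j = G j := by
  induction hjn using Nat.decreasingInduction with
  | self => exact hc.top_left.trans hc.top_right.symm
  | of_succ j hjn ih =>
    have hF := inGammaS_of_sgnSeg_succ_eq (hc.flag_left.2 j (Nat.zero_le _) hjn)
      (by rw [hc.sgnSeg_left_eq_neg_one (by omega) hjn, hc.sgnSeg_left_eq_neg_one hkj hjn.le])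
    have hG := inGammaS_of_sgnSeg_succ_eq (hc.flag_right.2 j (Nat.zero_le _) hjn)
      (by rw [hc.sgnSeg_right_eq_one (by omega) hjn, hc.sgnSeg_right_eq_one hkj hjn.le])
    rw [← hF.2, ← hG.2, ih (by omega)]

lemma sgnSeg_one_and_eq_one (hc : ConsecutiveAt S n t F G 0) :
    sgnSeg S 0 F 1 = 1 ∧ F 1 = G 1 := by
  have hFu := hc.isPencilExtremal_left le_rfl hc.lt_top
  have hGv := hc.isPencilExtremal_right le_rfl hc.lt_top
  rw [show sgnSeg S 0 F 0 = 1 from rfl, isPencilExtremal_one] at hFu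
  rw [show sgnSeg S 0 G 0 = 1 from rfl, isPencilExtremal_neg_one] at hGv
  obtain ⟨hs, he⟩ := hc.opetope.stepSign_eq_and_eq_of_consecutive_of_dim_eq_zero
    (levelLt_zero_iff.mp hc.lt_at) (hc.flag_right.1 0 le_rfl (Nat.zero_le _))
    (fun z hz h => hc.not_levelLt_between hz (fun j hj => by omega)
      ⟨levelLt_zero_iff.mpr h.1, levelLt_zero_iff.mpr h.2⟩)
    (hc.flag_left.2 0 le_rfl hc.lt_top) hFu (hc.flag_right.2 0 le_rfl hc.lt_top) hGv
  exact ⟨by rw [sgnSeg_succ, hs]; rfl, he⟩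

lemma sgnSeg_add_two_and_eq_add_two {m : ℕ} (hc : ConsecutiveAt S n t F G (m + 1)) :
    sgnSeg S 0 F (m + 2) = 1 ∧ F (m + 2) = G (m + 2) := by
  have hmn := hc.lt_top
  have hFu := hc.isPencilExtremal_left le_rfl hmn
  have hGv := hc.isPencilExtremal_right le_rfl hmn
  rw [sgnSeg_succ] at hFu
  rw [sgnSeg_succ, (hc.eq_below m (by omega)).symm,
    sgnSeg_congr fun i hi => (hc.eq_below i (by omega)).symm] at hGv
  have hlt := levelLt_succ_iff.mp hc.lt_at
  have hbetween (z : S.FaceS) (hz : inBoundary S (F m) z) :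
      ¬ (levelLt S F (m + 1) (F (m + 1)) z ∧ levelLt S F (m + 1) z (G (m + 1))) := by
    refine hc.not_levelLt_between ?_ fun j hj => by obtain rfl : j = m := by omega
                                                    exact hz
    have := inBoundary_dim hz
    have := hc.flag_left.1 m (Nat.zero_le _) (by omega)
    omega
  simp only [levelLt_succ_iff] at hbetween
  have hFbd := hc.flag_left.2 (m + 1) (Nat.zero_le _) hmn
  have hGbd := hc.flag_right.2 (m + 1) (Nat.zero_le _) hmn
  rcases sgnSeg_eq_one_or_eq_neg_one F m with hs | hs
  · simp only [hs, if_true, mul_one] at hlt hbetween hFu hGv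
    obtain ⟨hτ, -, he⟩ :=
      hc.opetope.stepSign_eq_and_eq_of_consecutive hlt hbetween hFbd hFu hGbd hGv
    refine ⟨?_, he⟩
    rw [sgnSeg_succ, sgnSeg_succ, hτ, hs, mul_one, stepSign_mul_self]
  · simp only [hs, if_neg (show (-1 : ℤ) ≠ 1 by decide), mul_neg_one, neg_neg]
      at hlt hbetween hFu hGv
    obtain ⟨-, hτ, he⟩ := hc.opetope.stepSign_eq_and_eq_of_consecutive hlt
      (fun z hz h => hbetween z hz h.symm) hGbd hGv hFbd hFu
    refine ⟨?_, he.symm⟩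
    rw [sgnSeg_succ, sgnSeg_succ, hτ, hs]
    linear_combination stepSign_mul_self (S := S) (F m) (F (m + 1))

theorem sgnSeg_left_succ_and_eq_succ (hc : ConsecutiveAt S n t F G k) :
    sgnSeg S 0 F (k + 1) = 1 ∧ F (k + 1) = G (k + 1) := by
  rcases k with _ | m
  · exact hc.sgnSeg_one_and_eq_one
  · exact hc.sgnSeg_add_two_and_eq_add_two

end ConsecutiveAt

end Flags

theorem consecutive_flags_intersection_general
    (S : PHg) (hS : IsOpetope S) (n : ℕ) (hn : hasDim S n)
    (t : S.FaceS)
    (F G : ℕ → S.FaceS)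
    (hF : IsRFlag S n 0 F) (hFt : F n = t)
    (hG : IsRFlag S n 0 G) (hGt : G n = t)
    (hlt : flagLt S 0 n F G)
    (hsucc : ∀ H, IsRFlag S n 0 H → H n = t → flagLt S 0 n F H →
      (EqOnFl 0 n G H ∨ flagLt S 0 n G H)) :
    ∃ k, k ≤ n ∧ F k ≠ G k ∧ (∀ j, j ≤ n → j ≠ k → F j = G j) ∧
      (sgnSeg S 0 F n = 1 → k + 1 = n) ∧
      (sgnSeg S 0 F n = -1 → LowLevelT S n F k) := by
  obtain ⟨k, hkn, hbelow, hne, hlevel⟩ := flagLt_iff.mp hlt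
  have hc : ConsecutiveAt S n t F G k :=
    ⟨hS, hn, hF, hFt, hG, hGt, hkn, hbelow, hne, hlevel, hsucc⟩
  obtain ⟨hsgn, hnext⟩ := hc.sgnSeg_left_succ_and_eq_succ
  have hk := hc.lt_top
  have hsgn_above {j : ℕ} (hj : k + 2 ≤ j) (hjn : j ≤ n) := hc.sgnSeg_left_eq_neg_one hj hjn
  refine ⟨k, hkn, hne, fun j hj hjk => ?_, fun h => ?_, fun h => ?_⟩
  · rcases Nat.lt_or_ge j k with hjk' | hkj
    · exact hbelow j hjk'
    obtain rfl | hkj := (show k + 1 ≤ j by omega).eq_or_lt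
    · exact hnext
    · exact hc.eq_of_add_two_le hkj hj
  · by_contra hn'
    have := hsgn_above (j := n) (by omega) le_rfl
    omega
  · have hk2 : k + 2 ≤ n := by
      by_contra hk2
      obtain rfl : n = k + 1 := by omega
      omega
    refine ⟨hk2, (inDelta_iff_sgnSeg_succ F (k + 1)).mpr ?_, fun j hj hjn hd => ?_⟩
    · rw [hsgn_above le_rfl hk2, hsgn]
    · have := (inDelta_iff_sgnSeg_succ F (j + 1)).mp hd
      rw [hsgn_above (by omega) hjn, hsgn_above (by omega) (by omega)] at this
      omega

/-- Two consecutive maximal flags differ at exactly one level;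
their intersection is a high p-flag if the first flag is positive and a low
p-flag if the first flag is negative. -/
theorem consecutive_flags_intersection
    (S : PHg) (hS : IsOpetope S) (n : ℕ) (hn : hasDim S n)
    (t : S.FaceS) (ht : t.1 = n)
    (F G : ℕ → S.FaceS)
    (hF : IsRFlag S n 0 F) (hFt : F n = t)
    (hG : IsRFlag S n 0 G) (hGt : G n = t)
    (hlt : flagLt S 0 n F G)
    (hsucc : ∀ H, IsRFlag S n 0 H → H n = t → flagLt S 0 n F H →
      (EqOnFl 0 n G H ∨ flagLt S 0 n G H)) :
    ∃ k, k ≤ n ∧ F k ≠ G k ∧ (∀ j, j ≤ n → j ≠ k → F j = G j) ∧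
      (sgnSeg S 0 F n = 1 → k + 1 = n) ∧
      (sgnSeg S 0 F n = -1 → LowLevelT S n F k) :=
  consecutive_flags_intersection_general S hS n hn t F G hF hFt hG hGt hlt hsucc
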